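/- In the (2,4,2) case, let Y be a matrix supported on S ∪ Φ with entries y_{23}, y_{14} (positions of S in the upper left), y_{67}, y_{58} (positions of S in the lower right), and y_{37}, y_{38}, y_{47}, y_{48} (positions of Φ), all other entries zero. Then M1(Y) = y_{23}, M2(Y) = −y_{14}y_{23}, N1(Y) = y_{67}, N2(Y) = −y_{58}y_{67}, L11(Y) = y_{23}y_{37}, L12(Y) = −y_{14}y_{23}y_{47}, L21(Y) = −y_{23}y_{38}y_{67}, and L22(Y) = y_{14}y_{23}y_{48}y_{67}. In particular, the map sending (y_{23},y_{14},y_{67},y_{58},y_{37},y_{38},y_{47},y_{48}) to the 8-tuple of values of (M1,M2,N1,N2,L11,L21,L12,L22) is injective on the open set where y_{23}y_{14}y_{67}y_{58} ≠ 0. -/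
import Mathlib

set_option linter.unusedSectionVars false

noncomputable section

open Matrix

variable {K : Type*} [Field K] [CharZero K]

/-- membership in the (2,4,2) nilradical of gl(8,K) (indices 0-based):
entries vanish outside rows 1-2 × cols 3-8 and rows 3-6 × cols 7-8 (1-based). -/
def InNil242 (Y : Matrix (Fin 8) (Fin 8) K) : Prop :=
  ∀ i j : Fin 8,
    ¬ ((i.val < 2 ∧ 2 ≤ j.val) ∨ (2 ≤ i.val ∧ i.val < 6 ∧ 6 ≤ j.val)) → Y i j = 0

/-- upper unitriangular matrices. -/
def IsUnitriangular {n : ℕ} (g : Matrix (Fin n) (Fin n) K) : Prop :=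
  (∀ i, g i i = 1) ∧ ∀ i j : Fin n, j < i → g i j = 0

def fM1 (Y : Matrix (Fin 8) (Fin 8) K) : K := Y 1 2
def fM2 (Y : Matrix (Fin 8) (Fin 8) K) : K := Y 0 2 * Y 1 3 - Y 0 3 * Y 1 2
def fN1 (Y : Matrix (Fin 8) (Fin 8) K) : K := Y 5 6
def fN2 (Y : Matrix (Fin 8) (Fin 8) K) : K := Y 4 6 * Y 5 7 - Y 4 7 * Y 5 6
def fL11 (Y : Matrix (Fin 8) (Fin 8) K) : K :=
  Y 1 2 * Y 2 6 + Y 1 3 * Y 3 6 + Y 1 4 * Y 4 6 + Y 1 5 * Y 5 6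
def fL12 (Y : Matrix (Fin 8) (Fin 8) K) : K :=
  (Y 0 2 * Y 1 3 - Y 0 3 * Y 1 2) * Y 3 6 +
  (Y 0 2 * Y 1 4 - Y 0 4 * Y 1 2) * Y 4 6 +
  (Y 0 2 * Y 1 5 - Y 0 5 * Y 1 2) * Y 5 6
def fL21 (Y : Matrix (Fin 8) (Fin 8) K) : K :=
  Y 1 2 * (Y 2 6 * Y 5 7 - Y 2 7 * Y 5 6) +
  Y 1 3 * (Y 3 6 * Y 5 7 - Y 3 7 * Y 5 6) +
  Y 1 4 * (Y 4 6 * Y 5 7 - Y 4 7 * Y 5 6)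
def fL22 (Y : Matrix (Fin 8) (Fin 8) K) : K :=
  (Y 0 2 * Y 1 3 - Y 0 3 * Y 1 2) * (Y 3 6 * Y 5 7 - Y 3 7 * Y 5 6) +
  (Y 0 2 * Y 1 4 - Y 0 4 * Y 1 2) * (Y 4 6 * Y 5 7 - Y 4 7 * Y 5 6)
def fD (Y : Matrix (Fin 8) (Fin 8) K) : K :=
  (Y * Y) 0 6 * (Y * Y) 1 7 - (Y * Y) 0 7 * (Y * Y) 1 6

/-- the slice Y: matrices supported on S ∪ Φ = {(2,3),(1,4),(6,7),(5,8)} ∪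
{(3,7),(3,8),(4,7),(4,8)} (1-based positions). -/
def Yslice (y23 y14 y67 y58 y37 y38 y47 y48 : K) : Matrix (Fin 8) (Fin 8) K :=
  !![0,0,0,y14,0,0,0,0;
     0,0,y23,0,0,0,0,0;
     0,0,0,0,0,0,y37,y38;
     0,0,0,0,0,0,y47,y48;
     0,0,0,0,0,0,0,y58;
     0,0,0,0,0,0,y67,0;
     0,0,0,0,0,0,0,0;
     0,0,0,0,0,0,0,0]

section Aux
variable (y23 y14 y67 y58 y37 y38 y47 y48 : K)

lemma Ys12 : Yslice y23 y14 y67 y58 y37 y38 y47 y48 1 2 = y23 := rfl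
lemma Ys03 : Yslice y23 y14 y67 y58 y37 y38 y47 y48 0 3 = y14 := rfl
lemma Ys56 : Yslice y23 y14 y67 y58 y37 y38 y47 y48 5 6 = y67 := rfl
lemma Ys47 : Yslice y23 y14 y67 y58 y37 y38 y47 y48 4 7 = y58 := rfl
lemma Ys26 : Yslice y23 y14 y67 y58 y37 y38 y47 y48 2 6 = y37 := rfl
lemma Ys27 : Yslice y23 y14 y67 y58 y37 y38 y47 y48 2 7 = y38 := rfl
lemma Ys36 : Yslice y23 y14 y67 y58 y37 y38 y47 y48 3 6 = y47 := rfl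
lemma Ys37 : Yslice y23 y14 y67 y58 y37 y38 y47 y48 3 7 = y48 := rfl
lemma Ys02 : Yslice y23 y14 y67 y58 y37 y38 y47 y48 0 2 = 0 := rfl
lemma Ys13 : Yslice y23 y14 y67 y58 y37 y38 y47 y48 1 3 = 0 := rfl
lemma Ys14 : Yslice y23 y14 y67 y58 y37 y38 y47 y48 1 4 = 0 := rfl
lemma Ys15 : Yslice y23 y14 y67 y58 y37 y38 y47 y48 1 5 = 0 := rfl
lemma Ys04 : Yslice y23 y14 y67 y58 y37 y38 y47 y48 0 4 = 0 := rfl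
lemma Ys05 : Yslice y23 y14 y67 y58 y37 y38 y47 y48 0 5 = 0 := rfl
lemma Ys46 : Yslice y23 y14 y67 y58 y37 y38 y47 y48 4 6 = 0 := rfl
lemma Ys57 : Yslice y23 y14 y67 y58 y37 y38 y47 y48 5 7 = 0 := rfl

end Aux

/-- values of the generators on the slice Y, and injectivity of the
resulting map on the locus y23·y14·y67·y58 ≠ 0. -/
theorem values_on_slice_and_injectivity :
    (∀ y23 y14 y67 y58 y37 y38 y47 y48 : K,
      fM1 (Yslice y23 y14 y67 y58 y37 y38 y47 y48) = y23 ∧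
      fM2 (Yslice y23 y14 y67 y58 y37 y38 y47 y48) = -(y14 * y23) ∧
      fN1 (Yslice y23 y14 y67 y58 y37 y38 y47 y48) = y67 ∧
      fN2 (Yslice y23 y14 y67 y58 y37 y38 y47 y48) = -(y58 * y67) ∧
      fL11 (Yslice y23 y14 y67 y58 y37 y38 y47 y48) = y23 * y37 ∧
      fL12 (Yslice y23 y14 y67 y58 y37 y38 y47 y48) = -(y14 * y23 * y47) ∧
      fL21 (Yslice y23 y14 y67 y58 y37 y38 y47 y48) = -(y23 * y38 * y67) ∧
      fL22 (Yslice y23 y14 y67 y58 y37 y38 y47 y48) = y14 * y23 * y48 * y67) ∧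
    (∀ y23 y14 y67 y58 y37 y38 y47 y48 y23' y14' y67' y58' y37' y38' y47' y48' : K,
      y23 * y14 * y67 * y58 ≠ 0 → y23' * y14' * y67' * y58' ≠ 0 →
      fM1 (Yslice y23 y14 y67 y58 y37 y38 y47 y48) =
        fM1 (Yslice y23' y14' y67' y58' y37' y38' y47' y48') →
      fM2 (Yslice y23 y14 y67 y58 y37 y38 y47 y48) =
        fM2 (Yslice y23' y14' y67' y58' y37' y38' y47' y48') →
      fN1 (Yslice y23 y14 y67 y58 y37 y38 y47 y48) =
        fN1 (Yslice y23' y14' y67' y58' y37' y38' y47' y48') →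
      fN2 (Yslice y23 y14 y67 y58 y37 y38 y47 y48) =
        fN2 (Yslice y23' y14' y67' y58' y37' y38' y47' y48') →
      fL11 (Yslice y23 y14 y67 y58 y37 y38 y47 y48) =
        fL11 (Yslice y23' y14' y67' y58' y37' y38' y47' y48') →
      fL21 (Yslice y23 y14 y67 y58 y37 y38 y47 y48) =
        fL21 (Yslice y23' y14' y67' y58' y37' y38' y47' y48') →
      fL12 (Yslice y23 y14 y67 y58 y37 y38 y47 y48) =
        fL12 (Yslice y23' y14' y67' y58' y37' y38' y47' y48') →
      fL22 (Yslice y23 y14 y67 y58 y37 y38 y47 y48) =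
        fL22 (Yslice y23' y14' y67' y58' y37' y38' y47' y48') →
      y23 = y23' ∧ y14 = y14' ∧ y67 = y67' ∧ y58 = y58' ∧
      y37 = y37' ∧ y38 = y38' ∧ y47 = y47' ∧ y48 = y48') := by
  constructor
  · intro y23 y14 y67 y58 y37 y38 y47 y48
    refine ⟨?_, ?_, ?_, ?_, ?_, ?_, ?_, ?_⟩ <;>
      simp only [fM1, fM2, fN1, fN2, fL11, fL12, fL21, fL22,
        Ys12, Ys03, Ys56, Ys47, Ys26, Ys27, Ys36, Ys37, Ys02, Ys13, Ys14, Ys15,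
        Ys04, Ys05, Ys46, Ys57] <;> ring
  · intro y23 y14 y67 y58 y37 y38 y47 y48 y23' y14' y67' y58' y37' y38' y47' y48'
      h h' h1 h2 h3 h4 h5 h6 h7 h8
    simp only [fM1, fM2, fN1, fN2, fL11, fL12, fL21, fL22,
      Ys12, Ys03, Ys56, Ys47, Ys26, Ys27, Ys36, Ys37, Ys02, Ys13, Ys14, Ys15,
      Ys04, Ys05, Ys46, Ys57] at h1 h2 h3 h4 h5 h6 h7 h8
    ring_nf at h2 h4 h5 h6 h7 h8
    simp only [ne_eq, mul_eq_zero, not_or] at h h'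
    obtain ⟨⟨⟨e23, e14⟩, e67⟩, e58⟩ := h
    subst h1 h3
    have h14 : y14 = y14' := mul_right_cancel₀ e23 (neg_inj.mp h2)
    subst h14
    refine ⟨rfl, rfl, rfl, ?_, ?_, ?_, ?_, ?_⟩
    · exact mul_right_cancel₀ e67 (neg_inj.mp h4)
    · exact mul_left_cancel₀ e23 h5
    · exact mul_left_cancel₀ (mul_ne_zero e23 e67) (neg_inj.mp h6)
    · exact mul_left_cancel₀ (mul_ne_zero e14 e23) (neg_inj.mp h7)
    · exact mul_left_cancel₀ (mul_ne_zero (mul_ne_zero e14 e23) e67) h8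

end
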